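/- arXiv:2201.02311 — 2 statements merged into one kernel-verified Lean document; each statement's English description precedes it below -/
import Mathlib

section
/- Let S ⊆ ℝⁿ × ℝᵐ, c ∈ ℝⁿ, ζ ∈ ℝᵐ. Suppose (X̄c, Z̄d) minimizes cᵀXc − ζᵀZd over S. Then for every Xd ∈ ℝᵐ and Θ ∈ ℝ satisfying Θ ≥ inf { cᵀXc : (Xc, Zd) ∈ S, Zd = Xd }, the strengthened Benders optimality cut holds: Θ ≥ cᵀX̄c + ζᵀ(Xd − Z̄d). -/
open Matrix

/-- Lemma 1: validity of the strengthened generalized Benders optimality cut.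
If `(Xc, Zd)` minimizes `cᵀXc − ζᵀZd` over `S`, then for every `Xd` and every
`Θ` upper-bounded below by the value of the constrained subproblem with copy
constraint `Zd = Xd`, the cut `Θ ≥ cᵀX̄c + ζᵀ(Xd − Z̄d)` holds. -/
theorem strengthened_benders_optimality_cut (n m : ℕ)
    (S : Set ((Fin n → ℝ) × (Fin m → ℝ))) (c : Fin n → ℝ) (ζ : Fin m → ℝ)
    (Xc : Fin n → ℝ) (Zd : Fin m → ℝ) (hmem : (Xc, Zd) ∈ S)
    (hmin : ∀ p ∈ S, c ⬝ᵥ Xc - ζ ⬝ᵥ Zd ≤ c ⬝ᵥ p.1 - ζ ⬝ᵥ p.2)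
    (Xd : Fin m → ℝ) (Θ : ℝ)
    (hΘ : sInf ((fun p => ((c ⬝ᵥ p.1 : ℝ) : EReal)) '' {p ∈ S | p.2 = Xd})
            ≤ (Θ : EReal)) :
    c ⬝ᵥ Xc + ζ ⬝ᵥ (Xd - Zd) ≤ Θ := by
  have key : ((c ⬝ᵥ Xc + ζ ⬝ᵥ (Xd - Zd) : ℝ) : EReal)
      ≤ sInf ((fun p => ((c ⬝ᵥ p.1 : ℝ) : EReal)) '' {p ∈ S | p.2 = Xd}) := by
    apply le_sInf
    rintro x ⟨p, ⟨hpS, hpXd⟩, rfl⟩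
    have h := hmin p hpS
    rw [hpXd] at h
    have h2 : c ⬝ᵥ Xc + ζ ⬝ᵥ (Xd - Zd) ≤ c ⬝ᵥ p.1 := by
      rw [dotProduct_sub]; linarith
    exact EReal.coe_le_coe_iff.mpr h2
  exact_mod_cast le_trans key hΘ
end

section
/- Let the feasibility subproblem be min over (Xc, Zd, S_a, S_b, S_c) of 1ᵀS_a + 1ᵀS_b + 1ᵀS_c − Υᵀ(Zd − Xd*) subject to AdZd + AcXc ≤ b_a + S_a, BdZd + G(Xc) ≤ b_b + S_b, DdZd ≤ b_c + S_c, Zd ∈ {0,1}ᵐ, with optimal solution (S̄_a, S̄_b, S̄_c, Z̄d). If Xd ∈ {0,1}ᵐ is feasible for the original problem (i.e., there exists Xc with AdXd + AcXc ≤ b_a, BdXd + G(Xc) ≤ b_b, DdXd ≤ b_c), then the strengthened feasibility cut holds at Xd: 0 ≥ 1ᵀS̄_a + 1ᵀS̄_b + 1ᵀS̄_c + Υᵀ(Xd − Z̄d). -/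
open Matrix

/-- Validity of the strengthened Benders feasibility cut: given an optimal
solution `(X̄c, Z̄d, S̄a, S̄b, S̄c)` of the penalized feasibility subproblem,
any binary master solution `Xd` that is feasible for the original problem
satisfies `0 ≥ 1ᵀS̄a + 1ᵀS̄b + 1ᵀS̄c + Υᵀ(Xd − Z̄d)`. -/
theorem strengthened_feasibility_cut (m n pa pb pc : ℕ)
    (Ad : Matrix (Fin pa) (Fin m) ℝ) (Ac : Matrix (Fin pa) (Fin n) ℝ)
    (Bd : Matrix (Fin pb) (Fin m) ℝ) (Dd : Matrix (Fin pc) (Fin m) ℝ)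
    (G : (Fin n → ℝ) → Fin pb → ℝ)
    (ba : Fin pa → ℝ) (bb : Fin pb → ℝ) (bc : Fin pc → ℝ)
    (Υ Xds : Fin m → ℝ)
    (Xcb : Fin n → ℝ) (Zdb : Fin m → ℝ)
    (Sab : Fin pa → ℝ) (Sbb : Fin pb → ℝ) (Scb : Fin pc → ℝ)
    -- the bar solution is feasible for the feasibility subproblem
    (hfa : Ad.mulVec Zdb + Ac.mulVec Xcb ≤ ba + Sab)
    (hfb : Bd.mulVec Zdb + G Xcb ≤ bb + Sbb)
    (hfc : Dd.mulVec Zdb ≤ bc + Scb)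
    (hZbin : ∀ i, Zdb i = 0 ∨ Zdb i = 1)
    (hSa : 0 ≤ Sab) (hSb : 0 ≤ Sbb) (hSc : 0 ≤ Scb)
    -- and optimal for it
    (hopt : ∀ (Xc : Fin n → ℝ) (Zd : Fin m → ℝ) (Sa : Fin pa → ℝ)
        (Sb : Fin pb → ℝ) (Sc : Fin pc → ℝ),
        Ad.mulVec Zd + Ac.mulVec Xc ≤ ba + Sa →
        Bd.mulVec Zd + G Xc ≤ bb + Sb →
        Dd.mulVec Zd ≤ bc + Sc →
        (∀ i, Zd i = 0 ∨ Zd i = 1) → 0 ≤ Sa → 0 ≤ Sb → 0 ≤ Sc →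
        (∑ i, Sab i) + (∑ i, Sbb i) + (∑ i, Scb i) - Υ ⬝ᵥ (Zdb - Xds)
          ≤ (∑ i, Sa i) + (∑ i, Sb i) + (∑ i, Sc i) - Υ ⬝ᵥ (Zd - Xds))
    -- a feasible binary master solution
    (Xd : Fin m → ℝ) (hXdbin : ∀ i, Xd i = 0 ∨ Xd i = 1)
    (Xc : Fin n → ℝ)
    (h1 : Ad.mulVec Xd + Ac.mulVec Xc ≤ ba)
    (h2 : Bd.mulVec Xd + G Xc ≤ bb)
    (h3 : Dd.mulVec Xd ≤ bc) :
    (∑ i, Sab i) + (∑ i, Sbb i) + (∑ i, Scb i) + Υ ⬝ᵥ (Xd - Zdb) ≤ 0 := by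
  have key := hopt Xc Xd 0 0 0
    (by simpa using h1) (by simpa using h2) (by simpa using h3)
    hXdbin le_rfl le_rfl le_rfl
  simp only [Pi.zero_apply, Finset.sum_const_zero] at key
  have hlin : Υ ⬝ᵥ (Xd - Zdb) = Υ ⬝ᵥ (Xd - Xds) - Υ ⬝ᵥ (Zdb - Xds) := by
    rw [← dotProduct_sub]; congr 1; ring_nf
  linarith [key, hlin.le, hlin.ge]
end
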